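/- For a principal H-bundle H → P → M over an n-dimensional manifold M, the following are equivalent: (i) P admits a Cartan connection for some Lie algebra 𝔤 ⊇ 𝔥 with dim 𝔤 = dim P; (ii) P admits a reductive Cartan connection (𝔤 = 𝔥 ⊕_H 𝔭 with H-invariant complement 𝔭); (iii) P admits a reductive Cartan connection with [𝔭,𝔭] = 0; (iv) P admits a soldering form; (v) P is geometrizable, i.e. there is a representation ρ : H → GL(n,ℝ) with P ×_H ℝⁿ ≅ TM. -/

import Mathlib

open Function Module

/-- Transport of fibers of a family of modules along an equality of base points. -/
def vcast {M : Type*} (TM : M → Type*) [∀ x, AddCommGroup (TM x)] [∀ x, Module ℝ (TM x)]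
    {x y : M} (e : x = y) : TM x ≃ₗ[ℝ] TM y := by
  subst e; exact LinearEquiv.refl ℝ (TM x)

variable {H : Type*} [Group H]
variable {P M : Type*}
variable {TP : P → Type*} [∀ p, AddCommGroup (TP p)] [∀ p, Module ℝ (TP p)]
variable {TM : M → Type*} [∀ x, AddCommGroup (TM x)] [∀ x, Module ℝ (TM x)]

section

variable (TP) (π : P → M) (act : P → H → P)
variable {𝔥 : Type*} [LieRing 𝔥] [LieAlgebra ℝ 𝔥]

/-- The data of a Cartan connection on the principal `H`-bundle `P` with values in a
Lie algebra `𝔤` containing `𝔥 = Lie(H)` (via `ι`), extending the adjoint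
representation `Ad𝔥` of `H`:  `ω_p : T_pP → 𝔤` is an isomorphism for each `p`,
`R_h^*ω = Ad(h⁻¹)ω`, and `ω(X†) = X` for all `X ∈ 𝔥`. -/
structure CartanData (Ad𝔥 : H →* (𝔥 ≃ₗ[ℝ] 𝔥))
    (dR : ∀ (p : P) (h : H), TP p ≃ₗ[ℝ] TP (act p h))
    (fund : ∀ p : P, 𝔥 →ₗ[ℝ] TP p) where
  𝔤 : Type*
  [lieRing : LieRing 𝔤]
  [lieAlg : LieAlgebra ℝ 𝔤]
  /-- the inclusion `𝔥 ≤ 𝔤` -/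
  ι : 𝔥 →ₗ[ℝ] 𝔤
  ι_inj : Function.Injective ι
  ι_bracket : ∀ X Y : 𝔥, ι ⁅X, Y⁆ = ⁅ι X, ι Y⁆
  /-- the adjoint action of `H` on `𝔤`, extending the one on `𝔥` -/
  Ad : H →* (𝔤 ≃ₗ[ℝ] 𝔤)
  Ad_ι : ∀ (h : H) (X : 𝔥), Ad h (ι X) = ι (Ad𝔥 h X)
  /-- the Cartan connection -/
  ω : ∀ p : P, TP p →ₗ[ℝ] 𝔤
  bij : ∀ p : P, Function.Bijective (ω p)
  equivar : ∀ (p : P) (h : H) (v : TP p), ω (act p h) (dR p h v) = Ad h⁻¹ (ω p v)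
  fund_eq : ∀ (p : P) (X : 𝔥), ω p (fund p X) = ι X

attribute [instance] CartanData.lieRing CartanData.lieAlg

end


section AuxLemmas

lemma vcast_symm_vcast {M : Type*} (TM : M → Type*) [∀ x, AddCommGroup (TM x)]
    [∀ x, Module ℝ (TM x)] {x y : M} (e : x = y) (v : TM x) :
    vcast TM e.symm (vcast TM e v) = v := by subst e; rfl

lemma aut_mul_apply {H : Type*} [Group H] {X : Type*} [AddCommGroup X] [Module ℝ X]
    (ρ : H →* (X ≃ₗ[ℝ] X)) (g h : H) (x : X) : ρ (g * h) x = ρ g (ρ h x) := by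
  rw [map_mul]; rfl

lemma aut_inv_cancel {H : Type*} [Group H] {X : Type*} [AddCommGroup X] [Module ℝ X]
    (ρ : H →* (X ≃ₗ[ℝ] X)) (h : H) (x : X) : ρ h (ρ h⁻¹ x) = x := by
  rw [← aut_mul_apply, mul_inv_cancel, map_one]; rfl

/-- The "abelian extension" Lie ring structure on `L × V`, with bracket
`⁅(X,v),(Y,w)⁆ = (⁅X,Y⁆, 0)`. -/
def prodLieRing (L V : Type*) [LieRing L] [AddCommGroup V] : LieRing (L × V) where
  bracket a b := (⁅a.1, b.1⁆, 0)
  add_lie x y z := by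
    show (⁅x.1 + y.1, z.1⁆, (0 : V)) = (⁅x.1, z.1⁆, (0 : V)) + (⁅y.1, z.1⁆, (0 : V))
    rw [add_lie]; ext <;> simp
  lie_add x y z := by
    show (⁅x.1, y.1 + z.1⁆, (0 : V)) = (⁅x.1, y.1⁆, (0 : V)) + (⁅x.1, z.1⁆, (0 : V))
    rw [lie_add]; ext <;> simp
  lie_self x := by
    show (⁅x.1, x.1⁆, (0 : V)) = 0
    rw [lie_self]; rfl
  leibniz_lie x y z := by
    show (⁅x.1, ⁅y.1, z.1⁆⁆, (0 : V))
        = (⁅⁅x.1, y.1⁆, z.1⁆, (0 : V)) + (⁅y.1, ⁅x.1, z.1⁆⁆, (0 : V))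
    rw [leibniz_lie]; ext <;> simp

/-- The Lie algebra structure accompanying `prodLieRing`. -/
def prodLieAlgebra (L V : Type*) [LieRing L] [LieAlgebra ℝ L] [AddCommGroup V] [Module ℝ V] :
    @LieAlgebra ℝ (L × V) _ (prodLieRing L V) :=
  letI := prodLieRing L V
  { (inferInstance : Module ℝ (L × V)) with
    lie_smul := fun t x y => by
      show (⁅x.1, t • y.1⁆, (0 : V)) = t • (⁅x.1, y.1⁆, (0 : V))
      rw [lie_smul]; ext <;> simp }

/-- Transport of a Lie ring structure along a linear equivalence. -/
def transportLieRing {A B : Type*} [LieRing A] [AddCommGroup B] [Module ℝ B]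
    [Module ℝ A] (e : A ≃ₗ[ℝ] B) : LieRing B :=
  { (inferInstance : AddCommGroup B) with
    bracket := fun x y => e ⁅e.symm x, e.symm y⁆
    add_lie := fun x y z => by
      show e ⁅e.symm (x + y), e.symm z⁆ = e ⁅e.symm x, e.symm z⁆ + e ⁅e.symm y, e.symm z⁆
      rw [map_add, add_lie, map_add]
    lie_add := fun x y z => by
      show e ⁅e.symm x, e.symm (y + z)⁆ = e ⁅e.symm x, e.symm y⁆ + e ⁅e.symm x, e.symm z⁆
      rw [map_add, lie_add, map_add]
    lie_self := fun x => by
      show e ⁅e.symm x, e.symm x⁆ = 0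
      rw [lie_self, map_zero]
    leibniz_lie := fun x y z => by
      show e ⁅e.symm x, e.symm (e ⁅e.symm y, e.symm z⁆)⁆
          = e ⁅e.symm (e ⁅e.symm x, e.symm y⁆), e.symm z⁆
            + e ⁅e.symm y, e.symm (e ⁅e.symm x, e.symm z⁆)⁆
      rw [e.symm_apply_apply, e.symm_apply_apply, e.symm_apply_apply, leibniz_lie, map_add] }

/-- Transport of a Lie algebra structure along a linear equivalence. -/
def transportLieAlgebra {A B : Type*} [LieRing A] [LieAlgebra ℝ A] [AddCommGroup B]
    [Module ℝ B] (e : A ≃ₗ[ℝ] B) : @LieAlgebra ℝ B _ (transportLieRing e) :=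
  letI := transportLieRing e
  { (inferInstance : Module ℝ B) with
    lie_smul := fun t x y => by
      show e ⁅e.symm x, e.symm (t • y)⁆ = t • e ⁅e.symm x, e.symm y⁆
      rw [map_smul, lie_smul, map_smul] }

lemma ker_eq_of_le_of_finrank {A : Type*} [AddCommGroup A] [Module ℝ A]
    [FiniteDimensional ℝ A] {n : ℕ} (f : A →ₗ[ℝ] (Fin n → ℝ)) (hf : Function.Surjective f)
    (S : Submodule ℝ A) (hS : S ≤ LinearMap.ker f)
    (hdim : Module.finrank ℝ S + n = Module.finrank ℝ A) :
    S = LinearMap.ker f := by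
  apply Submodule.eq_of_le_of_finrank_eq hS
  have h1 := LinearMap.finrank_range_add_finrank_ker f
  have h2 : Module.finrank ℝ (LinearMap.range f) = n := by
    rw [LinearMap.range_eq_top.mpr hf, finrank_top, Module.finrank_fin_fun]
  omega

universe uH uP uTP u𝔥 uM uTM v

set_option maxHeartbeats 4000000

/-- Any Cartan connection induces a soldering form (quotient by the image of `𝔥`). -/
lemma soldering_of_cartan {H : Type uH} [Group H] {P : Type uP} {TP : P → Type uTP}
    [∀ p, AddCommGroup (TP p)] [∀ p, Module ℝ (TP p)]
    {M : Type uM} {TM : M → Type uTM} [∀ x, AddCommGroup (TM x)] [∀ x, Module ℝ (TM x)]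
    {𝔥 : Type u𝔥} [LieRing 𝔥] [LieAlgebra ℝ 𝔥] [FiniteDimensional ℝ 𝔥]
    [∀ p, FiniteDimensional ℝ (TP p)] [Nonempty P]
    (n : ℕ) (Ad𝔥 : H →* (𝔥 ≃ₗ[ℝ] 𝔥)) {π : P → M} (act : P → H → P)
    (dπ : ∀ p, TP p →ₗ[ℝ] TM (π p))
    (dR : ∀ (p : P) (h : H), TP p ≃ₗ[ℝ] TP (act p h))
    (fund : ∀ p : P, 𝔥 →ₗ[ℝ] TP p)
    (hvert : ∀ (p : P) (v : TP p), dπ p v = 0 ↔ v ∈ LinearMap.range (fund p))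
    (hdimP : ∀ p : P, finrank ℝ (TP p) = finrank ℝ 𝔥 + n)
    (c : CartanData.{uH, uP, uTP, u𝔥, v} TP act Ad𝔥 dR fund) :
    ∃ (ρ : H →* ((Fin n → ℝ) ≃ₗ[ℝ] (Fin n → ℝ)))
      (θ : ∀ p : P, TP p →ₗ[ℝ] (Fin n → ℝ)),
      (∀ p : P, Surjective (θ p)) ∧
      (∀ (p : P) (v : TP p), dπ p v = 0 → θ p v = 0) ∧
      (∀ (p : P) (h : H) (v : TP p), θ (act p h) (dR p h v) = ρ h⁻¹ (θ p v)) := by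
  obtain ⟨p₀⟩ := ‹Nonempty P›
  haveI : FiniteDimensional ℝ c.𝔤 := Module.Finite.of_surjective (c.ω p₀) (c.bij p₀).2
  set S : Submodule ℝ c.𝔤 := LinearMap.range c.ι with hSdef
  have hSmap : ∀ h : H, S.map (c.Ad h).toLinearMap = S := by
    intro h
    apply le_antisymm
    · rintro x ⟨-, ⟨X, rfl⟩, rfl⟩
      exact ⟨Ad𝔥 h X, (c.Ad_ι h X).symm⟩
    · rintro x ⟨X, rfl⟩
      refine ⟨c.ι (Ad𝔥 h⁻¹ X), ⟨Ad𝔥 h⁻¹ X, rfl⟩, ?_⟩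
      show c.Ad h (c.ι (Ad𝔥 h⁻¹ X)) = c.ι X
      rw [c.Ad_ι, ← aut_mul_apply, mul_inv_cancel, map_one]
      rfl
  have hd𝔤 : finrank ℝ c.𝔤 = finrank ℝ 𝔥 + n := by
    rw [← (LinearEquiv.ofBijective (c.ω p₀) (c.bij p₀)).finrank_eq]
    exact hdimP p₀
  have hdS : finrank ℝ S = finrank ℝ 𝔥 := LinearMap.finrank_range_of_inj c.ι_inj
  have hdQ : finrank ℝ (c.𝔤 ⧸ S) = n := by
    have := S.finrank_quotient_add_finrank
    omega
  let e : (c.𝔤 ⧸ S) ≃ₗ[ℝ] (Fin n → ℝ) :=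
    LinearEquiv.ofFinrankEq _ _ (by rw [hdQ, Module.finrank_fin_fun])
  let ρ' : H → ((c.𝔤 ⧸ S) ≃ₗ[ℝ] (c.𝔤 ⧸ S)) := fun h =>
    Submodule.Quotient.equiv S S (c.Ad h) (hSmap h)
  have hρ' : ∀ (h : H) (x : c.𝔤), ρ' h (Submodule.Quotient.mk x)
      = Submodule.Quotient.mk (c.Ad h x) := fun h x => rfl
  let ρfun : H → ((Fin n → ℝ) ≃ₗ[ℝ] (Fin n → ℝ)) := fun h => (e.symm.trans (ρ' h)).trans e
  have hρmul : ∀ g h : H, ρfun (g * h) = ρfun g * ρfun h := by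
    intro g h
    apply LinearEquiv.ext
    intro w
    show e (ρ' (g * h) (e.symm w)) = e (ρ' g (e.symm (e (ρ' h (e.symm w)))))
    rw [e.symm_apply_apply]
    obtain ⟨x, hx⟩ := Submodule.Quotient.mk_surjective S (e.symm w)
    rw [← hx, hρ', hρ', hρ', aut_mul_apply]
  refine ⟨MonoidHom.mk' ρfun hρmul, fun p => e.toLinearMap ∘ₗ S.mkQ ∘ₗ c.ω p, ?_, ?_, ?_⟩
  · intro p
    simp only [LinearMap.coe_comp, LinearEquiv.coe_coe]
    exact e.surjective.comp ((Submodule.mkQ_surjective S).comp (c.bij p).2)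
  · intro p v hv
    obtain ⟨X, rfl⟩ := (hvert p v).mp hv
    simp only [LinearMap.coe_comp, comp_apply, LinearEquiv.coe_coe]
    rw [c.fund_eq]
    have h0 : S.mkQ (c.ι X) = 0 := by
      rw [Submodule.mkQ_apply]
      exact (Submodule.Quotient.mk_eq_zero S).mpr ⟨X, rfl⟩
    rw [h0, map_zero]
  · intro p h v
    simp only [LinearMap.coe_comp, comp_apply, LinearEquiv.coe_coe]
    rw [c.equivar]
    show e (S.mkQ (c.Ad h⁻¹ (c.ω p v))) = e (ρ' h⁻¹ (e.symm (e (S.mkQ (c.ω p v)))))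
    rw [e.symm_apply_apply, Submodule.mkQ_apply, Submodule.mkQ_apply, hρ']

/-- Any soldering form together with an Ehresmann connection yields a reductive Cartan
connection with abelian complement, in any universe. -/
lemma cartan_of_soldering {H : Type uH} [Group H] {P : Type uP} {TP : P → Type uTP}
    [∀ p, AddCommGroup (TP p)] [∀ p, Module ℝ (TP p)]
    {M : Type uM} {TM : M → Type uTM} [∀ x, AddCommGroup (TM x)] [∀ x, Module ℝ (TM x)]
    {𝔥 : Type u𝔥} [LieRing 𝔥] [LieAlgebra ℝ 𝔥] [FiniteDimensional ℝ 𝔥]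
    [∀ p, FiniteDimensional ℝ (TP p)]
    (n : ℕ) (Ad𝔥 : H →* (𝔥 ≃ₗ[ℝ] 𝔥)) {π : P → M} (act : P → H → P)
    (dπ : ∀ p, TP p →ₗ[ℝ] TM (π p))
    (dR : ∀ (p : P) (h : H), TP p ≃ₗ[ℝ] TP (act p h))
    (fund : ∀ p : P, 𝔥 →ₗ[ℝ] TP p)
    (hfund_inj : ∀ p, Injective (fund p))
    (hvert : ∀ (p : P) (v : TP p), dπ p v = 0 ↔ v ∈ LinearMap.range (fund p))
    (hdimP : ∀ p : P, finrank ℝ (TP p) = finrank ℝ 𝔥 + n)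
    (γ : ∀ p : P, TP p →ₗ[ℝ] 𝔥)
    (hγ_fund : ∀ (p : P) (X : 𝔥), γ p (fund p X) = X)
    (hγ_eq : ∀ (p : P) (h : H) (v : TP p), γ (act p h) (dR p h v) = Ad𝔥 h⁻¹ (γ p v))
    (ρ : H →* ((Fin n → ℝ) ≃ₗ[ℝ] (Fin n → ℝ)))
    (θ : ∀ p : P, TP p →ₗ[ℝ] (Fin n → ℝ))
    (hθsurj : ∀ p, Surjective (θ p))
    (hθ0 : ∀ (p : P) (v : TP p), dπ p v = 0 → θ p v = 0)
    (hθeq : ∀ (p : P) (h : H) (v : TP p), θ (act p h) (dR p h v) = ρ h⁻¹ (θ p v)) :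
    ∃ c : CartanData.{uH, uP, uTP, u𝔥, v} TP act Ad𝔥 dR fund, ∃ 𝔭 : Submodule ℝ c.𝔤,
      IsCompl (LinearMap.range c.ι) 𝔭 ∧
      (∀ h : H, 𝔭.map (c.Ad h).toLinearMap = 𝔭) ∧
      (∀ a ∈ 𝔭, ∀ b ∈ 𝔭, ⁅a, b⁆ = (0 : c.𝔤)) := by
  have hker : ∀ p, LinearMap.range (fund p) = LinearMap.ker (θ p) := by
    intro p
    refine ker_eq_of_le_of_finrank _ (hθsurj p) _ ?_ ?_
    · intro v hv
      exact LinearMap.mem_ker.mpr (hθ0 p v ((hvert p v).mpr hv))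
    · rw [LinearMap.finrank_range_of_inj (hfund_inj p), hdimP p]
  have hθfund : ∀ (p : P) (X : 𝔥), θ p (fund p X) = 0 := fun p X =>
    hθ0 p _ ((hvert p _).mpr ⟨X, rfl⟩)
  letI instLR : LieRing (𝔥 × (Fin n → ℝ)) := prodLieRing 𝔥 (Fin n → ℝ)
  letI instLA : LieAlgebra ℝ (𝔥 × (Fin n → ℝ)) := prodLieAlgebra 𝔥 (Fin n → ℝ)
  let eW : (𝔥 × (Fin n → ℝ)) ≃ₗ[ℝ] ULift.{v} (Fin (finrank ℝ 𝔥 + n) → ℝ) :=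
    (LinearEquiv.ofFinrankEq _ _ (by
      rw [Module.finrank_prod, Module.finrank_fin_fun, Module.finrank_fin_fun])).trans
      ULift.moduleEquiv.symm
  letI instWR : LieRing (ULift.{v} (Fin (finrank ℝ 𝔥 + n) → ℝ)) := transportLieRing eW
  letI instWA : LieAlgebra ℝ (ULift.{v} (Fin (finrank ℝ 𝔥 + n) → ℝ)) := transportLieAlgebra eW
  have hinj : ∀ p, Injective ((γ p).prod (θ p)) := by
    intro p
    rw [← LinearMap.ker_eq_bot, eq_bot_iff]
    intro v hv
    rw [LinearMap.mem_ker, LinearMap.prod_apply, Function.prod, Prod.mk_eq_zero] at hv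
    have hmem : v ∈ LinearMap.range (fund p) := by
      rw [hker p]
      exact LinearMap.mem_ker.mpr hv.2
    obtain ⟨X, rfl⟩ := hmem
    have hX : X = 0 := by rw [← hγ_fund p X, hv.1]
    simp [hX]
  have hbij : ∀ p, Bijective ((γ p).prod (θ p)) := by
    intro p
    refine ⟨hinj p, ?_⟩
    have hrank : finrank ℝ (TP p) = finrank ℝ (𝔥 × (Fin n → ℝ)) := by
      rw [hdimP p, Module.finrank_prod, Module.finrank_fin_fun]
    exact (LinearMap.injective_iff_surjective_of_finrank_eq_finrank hrank).mp (hinj p)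
  have hAdmul : ∀ g h : H,
      (fun h : H => (eW.symm.trans ((Ad𝔥 h).prodCongr (ρ h))).trans eW) (g * h)
      = (fun h : H => (eW.symm.trans ((Ad𝔥 h).prodCongr (ρ h))).trans eW) g
        * (fun h : H => (eW.symm.trans ((Ad𝔥 h).prodCongr (ρ h))).trans eW) h := by
    intro g h
    apply LinearEquiv.ext
    intro x
    show eW ((Ad𝔥 (g * h)).prodCongr (ρ (g * h)) (eW.symm x))
        = eW ((Ad𝔥 g).prodCongr (ρ g) (eW.symm (eW ((Ad𝔥 h).prodCongr (ρ h) (eW.symm x)))))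
    rw [eW.symm_apply_apply]
    congr 1
    rw [LinearEquiv.prodCongr_apply, LinearEquiv.prodCongr_apply, LinearEquiv.prodCongr_apply,
      aut_mul_apply, aut_mul_apply]
  refine ⟨{ 𝔤 := ULift.{v} (Fin (finrank ℝ 𝔥 + n) → ℝ)
            ι := eW.toLinearMap ∘ₗ LinearMap.inl ℝ 𝔥 (Fin n → ℝ)
            ι_inj := fun a b hab => LinearMap.inl_injective (eW.injective hab)
            ι_bracket := fun X Y => by
              show eW (LinearMap.inl ℝ 𝔥 (Fin n → ℝ) ⁅X, Y⁆)
                  = eW ⁅eW.symm (eW (LinearMap.inl ℝ 𝔥 (Fin n → ℝ) X)),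
                      eW.symm (eW (LinearMap.inl ℝ 𝔥 (Fin n → ℝ) Y))⁆
              rw [eW.symm_apply_apply, eW.symm_apply_apply]
              congr 1
            Ad := MonoidHom.mk' (fun h => (eW.symm.trans ((Ad𝔥 h).prodCongr (ρ h))).trans eW) hAdmul
            Ad_ι := fun h X => by
              show eW ((Ad𝔥 h).prodCongr (ρ h) (eW.symm (eW (LinearMap.inl ℝ 𝔥 (Fin n → ℝ) X))))
                  = eW (LinearMap.inl ℝ 𝔥 (Fin n → ℝ) (Ad𝔥 h X))
              rw [eW.symm_apply_apply]
              congr 1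
              show (Ad𝔥 h X, ρ h 0) = (Ad𝔥 h X, (0 : Fin n → ℝ))
              rw [map_zero]
            ω := fun p => eW.toLinearMap ∘ₗ (γ p).prod (θ p)
            bij := fun p => by
              show Bijective (fun v => eW ((γ p).prod (θ p) v))
              exact eW.bijective.comp (hbij p)
            equivar := fun p h v => by
              show eW ((γ (act p h)).prod (θ (act p h)) (dR p h v))
                  = eW ((Ad𝔥 h⁻¹).prodCongr (ρ h⁻¹) (eW.symm (eW ((γ p).prod (θ p) v))))
              rw [eW.symm_apply_apply]
              congr 1
              show (γ (act p h) (dR p h v), θ (act p h) (dR p h v))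
                  = (Ad𝔥 h⁻¹).prodCongr (ρ h⁻¹) (γ p v, θ p v)
              rw [LinearEquiv.prodCongr_apply, hγ_eq, hθeq]
            fund_eq := fun p X => by
              show eW ((γ p (fund p X), θ p (fund p X)))
                  = eW (LinearMap.inl ℝ 𝔥 (Fin n → ℝ) X)
              congr 1
              show (γ p (fund p X), θ p (fund p X)) = (X, (0 : Fin n → ℝ))
              rw [hγ_fund, hθfund] },
      (LinearMap.range (LinearMap.inr ℝ 𝔥 (Fin n → ℝ))).map eW.toLinearMap, ?_, ?_, ?_⟩
  · have h1 : LinearMap.range (eW.toLinearMap ∘ₗ LinearMap.inl ℝ 𝔥 (Fin n → ℝ))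
        = (LinearMap.range (LinearMap.inl ℝ 𝔥 (Fin n → ℝ))).map eW.toLinearMap :=
      LinearMap.range_comp _ _
    erw [h1]
    have h2 := (Submodule.orderIsoMapComap eW).isCompl
      (LinearMap.isCompl_range_inl_inr (R := ℝ) (M := 𝔥) (M₂ := Fin n → ℝ))
    exact h2
  · intro h
    apply le_antisymm
    · rintro x ⟨-, ⟨-, ⟨w, rfl⟩, rfl⟩, rfl⟩
      show eW ((Ad𝔥 h).prodCongr (ρ h) (eW.symm (eW (LinearMap.inr ℝ 𝔥 (Fin n → ℝ) w)))) ∈ _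
      rw [eW.symm_apply_apply]
      have hx : (Ad𝔥 h).prodCongr (ρ h) (LinearMap.inr ℝ 𝔥 (Fin n → ℝ) w)
          = LinearMap.inr ℝ 𝔥 (Fin n → ℝ) (ρ h w) := by
        show (Ad𝔥 h 0, ρ h w) = ((0 : 𝔥), ρ h w)
        rw [map_zero]
      rw [hx]
      exact Submodule.mem_map_of_mem ⟨ρ h w, rfl⟩
    · rintro x ⟨-, ⟨w, rfl⟩, rfl⟩
      have hx : (Ad𝔥 h).prodCongr (ρ h) (LinearMap.inr ℝ 𝔥 (Fin n → ℝ) (ρ h⁻¹ w))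
          = LinearMap.inr ℝ 𝔥 (Fin n → ℝ) w := by
        show (Ad𝔥 h 0, ρ h (ρ h⁻¹ w)) = ((0 : 𝔥), w)
        rw [map_zero, aut_inv_cancel]
      have hmem : LinearMap.inr ℝ 𝔥 (Fin n → ℝ) (ρ h⁻¹ w)
          ∈ LinearMap.range (LinearMap.inr ℝ 𝔥 (Fin n → ℝ)) := ⟨ρ h⁻¹ w, rfl⟩
      have hmem2 := Submodule.mem_map_of_mem (f := eW.toLinearMap) hmem
      rw [Submodule.mem_map]
      refine ⟨eW (LinearMap.inr ℝ 𝔥 (Fin n → ℝ) (ρ h⁻¹ w)), hmem2, ?_⟩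
      show eW ((Ad𝔥 h).prodCongr (ρ h)
        (eW.symm (eW (LinearMap.inr ℝ 𝔥 (Fin n → ℝ) (ρ h⁻¹ w))))) = _
      rw [eW.symm_apply_apply, hx]
      rfl
  · rintro a ⟨-, ⟨w, rfl⟩, rfl⟩ b ⟨-, ⟨w', rfl⟩, rfl⟩
    show eW ⁅eW.symm (eW (LinearMap.inr ℝ 𝔥 (Fin n → ℝ) w)),
        eW.symm (eW (LinearMap.inr ℝ 𝔥 (Fin n → ℝ) w'))⁆ = 0
    rw [eW.symm_apply_apply, eW.symm_apply_apply]
    have hz : (⁅LinearMap.inr ℝ 𝔥 (Fin n → ℝ) w, LinearMap.inr ℝ 𝔥 (Fin n → ℝ) w'⁆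
        : 𝔥 × (Fin n → ℝ)) = 0 := by
      show ((⁅(0 : 𝔥), (0 : 𝔥)⁆ : 𝔥), (0 : Fin n → ℝ)) = 0
      rw [lie_self]
      rfl
    rw [hz, map_zero]

end AuxLemmas

/-- **Main Theorem.** For a principal `H`-bundle `H → P → M` over an
`n`-dimensional (paracompact, so that Ehresmann connections exist) manifold `M`, the
following are equivalent:
(i) `P` admits a Cartan connection for some Lie algebra `𝔤 ⊇ 𝔥` with `dim 𝔤 = dim P`;
(ii) `P` admits a reductive Cartan connection (`𝔤 = 𝔥 ⊕_H 𝔭`, `𝔭` `H`-invariant);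
(iii) `P` admits a reductive Cartan connection with `[𝔭, 𝔭] = 0`;
(iv) `P` admits a soldering form;
(v) `P` is geometrizable, i.e. there is a representation `ρ : H → GL(n,ℝ)` with
`P ×_H ℝⁿ ≅ TM`. -/
theorem cartan_connection_tfae
    (n : ℕ)
    {𝔥 : Type*} [LieRing 𝔥] [LieAlgebra ℝ 𝔥] [FiniteDimensional ℝ 𝔥]
    [∀ p, FiniteDimensional ℝ (TP p)] [∀ x, FiniteDimensional ℝ (TM x)]
    [Nonempty P]
    (Ad𝔥 : H →* (𝔥 ≃ₗ[ℝ] 𝔥))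
    (π : P → M) (act : P → H → P)
    (hact_one : ∀ p, act p 1 = p)
    (hact_mul : ∀ p g h, act (act p g) h = act p (g * h))
    (hfree : ∀ p h, act p h = p → h = 1)
    (hπ : ∀ p h, π (act p h) = π p)
    (hπsurj : Surjective π)
    (htrans : ∀ p q, π p = π q → ∃ h, act p h = q)
    (dπ : ∀ p, TP p →ₗ[ℝ] TM (π p))
    (hdπ : ∀ p, Surjective (dπ p))
    (dR : ∀ (p : P) (h : H), TP p ≃ₗ[ℝ] TP (act p h))
    (hcompat : ∀ p h v, dπ p v = vcast TM (hπ p h) (dπ (act p h) (dR p h v)))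
    -- fundamental vector fields of `𝔥`, identifying `𝔥` with the vertical subspaces:
    (fund : ∀ p : P, 𝔥 →ₗ[ℝ] TP p)
    (hfund_inj : ∀ p, Injective (fund p))
    (hvert : ∀ (p : P) (v : TP p), dπ p v = 0 ↔ v ∈ LinearMap.range (fund p))
    -- dimensions: `dim M = n`, `dim P = dim 𝔥 + n`:
    (hdimM : ∀ x : M, finrank ℝ (TM x) = n)
    (hdimP : ∀ p : P, finrank ℝ (TP p) = finrank ℝ 𝔥 + n)
    -- `M` is paracompact, hence `P` carries an Ehresmann connection:
    (hconn : ∃ γ : ∀ p : P, TP p →ₗ[ℝ] 𝔥,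
      (∀ (p : P) (X : 𝔥), γ p (fund p X) = X) ∧
      (∀ (p : P) (h : H) (v : TP p), γ (act p h) (dR p h v) = Ad𝔥 h⁻¹ (γ p v))) :
    List.TFAE
      [ -- (i) there is a Cartan connection:
        Nonempty (CartanData TP act Ad𝔥 dR fund),
        -- (ii) there is a reductive Cartan connection:
        ∃ c : CartanData TP act Ad𝔥 dR fund, ∃ 𝔭 : Submodule ℝ c.𝔤,
          IsCompl (LinearMap.range c.ι) 𝔭 ∧
          (∀ h : H, 𝔭.map (c.Ad h).toLinearMap = 𝔭),
        -- (iii) there is a reductive Cartan connection with `[𝔭, 𝔭] = 0`: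
        ∃ c : CartanData TP act Ad𝔥 dR fund, ∃ 𝔭 : Submodule ℝ c.𝔤,
          IsCompl (LinearMap.range c.ι) 𝔭 ∧
          (∀ h : H, 𝔭.map (c.Ad h).toLinearMap = 𝔭) ∧
          (∀ a ∈ 𝔭, ∀ b ∈ 𝔭, ⁅a, b⁆ = (0 : c.𝔤)),
        -- (iv) there is a soldering form:
        ∃ (ρ : H →* ((Fin n → ℝ) ≃ₗ[ℝ] (Fin n → ℝ)))
          (θ : ∀ p : P, TP p →ₗ[ℝ] (Fin n → ℝ)),
          (∀ p : P, Surjective (θ p)) ∧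
          (∀ (p : P) (v : TP p), dπ p v = 0 → θ p v = 0) ∧
          (∀ (p : P) (h : H) (v : TP p), θ (act p h) (dR p h v) = ρ h⁻¹ (θ p v)),
        -- (v) `P` is geometrizable: `P ×_H ℝⁿ ≅ TM` for some representation `ρ`:
        ∃ (ρ : H →* ((Fin n → ℝ) ≃ₗ[ℝ] (Fin n → ℝ)))
          (fib : ∀ p : P, (Fin n → ℝ) ≃ₗ[ℝ] TM (π p)),
          ∀ (p : P) (h : H) (w : Fin n → ℝ),
            fib (act p h) w = vcast TM (hπ p h).symm (fib p (ρ h w)) ] := by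
  obtain ⟨γ, hγ_fund, hγ_eq⟩ := hconn
  have hkergen : ∀ (θ : ∀ p : P, TP p →ₗ[ℝ] (Fin n → ℝ)), (∀ p, Surjective (θ p)) →
      (∀ p v, dπ p v = 0 → θ p v = 0) →
      ∀ p, LinearMap.range (fund p) = LinearMap.ker (θ p) := by
    intro θ hs h0 p
    refine ker_eq_of_le_of_finrank _ (hs p) _ ?_ ?_
    · intro v hv
      exact LinearMap.mem_ker.mpr (h0 p v ((hvert p v).mpr hv))
    · rw [LinearMap.finrank_range_of_inj (hfund_inj p), hdimP p]
  tfae_have 1 → 4 := by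
    rintro ⟨c⟩
    exact soldering_of_cartan n Ad𝔥 act dπ dR fund hvert hdimP c
  tfae_have 2 → 4 := by
    rintro ⟨c, -⟩
    exact soldering_of_cartan n Ad𝔥 act dπ dR fund hvert hdimP c
  tfae_have 3 → 4 := by
    rintro ⟨c, -⟩
    exact soldering_of_cartan n Ad𝔥 act dπ dR fund hvert hdimP c
  tfae_have 4 → 1 := by
    rintro ⟨ρ, θ, hθsurj, hθ0, hθeq⟩
    obtain ⟨c, -⟩ := cartan_of_soldering n Ad𝔥 act dπ dR fund hfund_inj hvert hdimP
      γ hγ_fund hγ_eq ρ θ hθsurj hθ0 hθeq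
    exact ⟨c⟩
  tfae_have 4 → 2 := by
    rintro ⟨ρ, θ, hθsurj, hθ0, hθeq⟩
    obtain ⟨c, 𝔭, h1, h2, -⟩ := cartan_of_soldering n Ad𝔥 act dπ dR fund hfund_inj hvert hdimP
      γ hγ_fund hγ_eq ρ θ hθsurj hθ0 hθeq
    exact ⟨c, 𝔭, h1, h2⟩
  tfae_have 4 → 3 := by
    rintro ⟨ρ, θ, hθsurj, hθ0, hθeq⟩
    exact cartan_of_soldering n Ad𝔥 act dπ dR fund hfund_inj hvert hdimP
      γ hγ_fund hγ_eq ρ θ hθsurj hθ0 hθeq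
  tfae_have 4 → 5 := by
    rintro ⟨ρ, θ, hθsurj, hθ0, hθeq⟩
    have hker := hkergen θ hθsurj hθ0
    choose s hs using fun p =>
      (θ p).exists_rightInverse_of_surjective (LinearMap.range_eq_top.mpr (hθsurj p))
    have hsec : ∀ (p : P) (x : Fin n → ℝ), θ p (s p x) = x := by
      intro p x
      have := LinearMap.congr_fun (hs p) x
      simpa using this
    let g : ∀ p, (Fin n → ℝ) →ₗ[ℝ] TM (π p) := fun p => dπ p ∘ₗ s p
    have hgθ : ∀ (p : P) (v : TP p), g p (θ p v) = dπ p v := by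
      intro p v
      have hmem : s p (θ p v) - v ∈ LinearMap.ker (θ p) := by
        rw [LinearMap.mem_ker, map_sub, hsec, sub_self]
      rw [← hker p] at hmem
      have hd : dπ p (s p (θ p v) - v) = 0 := (hvert p _).mpr hmem
      rw [map_sub, sub_eq_zero] at hd
      exact hd
    have hgsurj : ∀ p, Surjective (g p) := by
      intro p u
      obtain ⟨v, rfl⟩ := hdπ p u
      exact ⟨θ p v, hgθ p v⟩
    have hginj : ∀ p, Injective (g p) := by
      intro p
      rw [← LinearMap.ker_eq_bot, eq_bot_iff]
      intro w hw
      rw [LinearMap.mem_ker] at hw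
      have h1 : s p w ∈ LinearMap.range (fund p) := (hvert p _).mp hw
      rw [hker p, LinearMap.mem_ker] at h1
      have h3 : w = 0 := by rw [← hsec p w, h1]
      simp [h3]
    refine ⟨ρ, fun p => LinearEquiv.ofBijective (g p) ⟨hginj p, hgsurj p⟩, ?_⟩
    intro p h w
    obtain ⟨u, hu⟩ := hθsurj (act p h) w
    obtain ⟨v, rfl⟩ := (dR p h).surjective u
    rw [← hu]
    show g (act p h) (θ (act p h) (dR p h v))
        = vcast TM (hπ p h).symm (g p (ρ h (θ (act p h) (dR p h v))))
    rw [hgθ, hθeq, aut_inv_cancel, hgθ, hcompat p h v, vcast_symm_vcast]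
  tfae_have 5 → 4 := by
    rintro ⟨ρ, fib, hfib⟩
    refine ⟨ρ, fun p => (fib p).symm.toLinearMap ∘ₗ dπ p, ?_, ?_, ?_⟩
    · intro p
      simp only [LinearMap.coe_comp, LinearEquiv.coe_coe]
      exact (fib p).symm.surjective.comp (hdπ p)
    · intro p v hv
      simp only [LinearMap.coe_comp, comp_apply, LinearEquiv.coe_coe]
      rw [hv, map_zero]
    · intro p h v
      simp only [LinearMap.coe_comp, comp_apply, LinearEquiv.coe_coe]
      have hd : dπ (act p h) (dR p h v) = vcast TM (hπ p h).symm (dπ p v) := by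
        rw [hcompat p h v, vcast_symm_vcast]
      rw [hd]
      have key : fib (act p h) (ρ h⁻¹ ((fib p).symm (dπ p v)))
          = vcast TM (hπ p h).symm (dπ p v) := by
        rw [hfib p h, aut_inv_cancel, LinearEquiv.apply_symm_apply]
      rw [← key, LinearEquiv.symm_apply_apply]
  tfae_finish
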